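/- arXiv:2401.00705 — 2 statements merged into one kernel-verified Lean document; each statement's English description precedes it below -/
import Mathlib

section
/- Let T be a tree, S a resolving set of T^3, and x a vertex of T. Then at most one connected component of T − x contains no vertex of S. -/
open SimpleGraph

/-- Ceiling of `n / 3` over the naturals. -/
def ceil3 (n : ℕ) : ℕ := (n + 2) / 3

/-- The cube of a graph: same vertices, `u,v` adjacent iff `1 ≤ d(u,v) ≤ 3`. -/
def cube {V : Type*} (G : SimpleGraph V) : SimpleGraph V where
  Adj u v := u ≠ v ∧ 1 ≤ G.dist u v ∧ G.dist u v ≤ 3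
  symm := ⟨fun u v ⟨h1, h2, h3⟩ =>
    ⟨h1.symm, by rwa [SimpleGraph.dist_comm], by rwa [SimpleGraph.dist_comm]⟩⟩
  loopless := ⟨fun u ⟨h, _⟩ => h rfl⟩

/-- `S` is a resolving set of `G`. -/
def IsResolving {V : Type*} (G : SimpleGraph V) (S : Set V) : Prop :=
  ∀ u v : V, u ≠ v → ∃ s ∈ S, G.dist s u ≠ G.dist s v

/-- The metric dimension of a graph on a finite vertex type. -/
noncomputable def metricDim {V : Type*} [Fintype V] (G : SimpleGraph V) : ℕ :=
  sInf {n | ∃ S : Finset V, S.card = n ∧ IsResolving G (S : Set V)}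

/-!
If `u` and `v` are neighbours of `x` lying in two different components of `T − x` that miss
`S`, then every `s ∈ S` other than `x` is separated by `x` from both, so
`d(s, u) = d(s, x) + 1 = d(s, v)`, and this also holds for `s = x`. Distances in the cube of a
connected graph are `⌈d / 3⌉`, so no vertex of `S` distinguishes `u` from `v` in `T³`.
-/

namespace SimpleGraph

variable {V : Type*} {G : SimpleGraph V}

lemma le_cube : G ≤ cube G := fun _ _ h =>
  ⟨h.ne, (dist_eq_one_iff_adj.2 h).ge, (dist_eq_one_iff_adj.2 h).le.trans (by norm_num)⟩

lemma connected_cube (hG : G.Connected) : (cube G).Connected := hG.mono le_cube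

lemma Connected.cube_dist_le_one (hG : G.Connected) {a b : V} (h : G.dist a b ≤ 3) :
    (cube G).dist a b ≤ 1 := by
  rcases eq_or_ne a b with rfl | hab
  · simp
  · exact (dist_eq_one_iff_adj.2 (⟨hab, hG.pos_dist_of_ne hab, h⟩ : (cube G).Adj a b)).le

lemma Connected.dist_le_three_mul_length (hG : G.Connected) {a b : V} (p : (cube G).Walk a b) :
    G.dist a b ≤ 3 * p.length := by
  induction p with
  | nil => simp
  | @cons a c b h q ih =>
    have htri := hG.dist_triangle (u := a) (v := c) (w := b)
    have hstep : G.dist a c ≤ 3 := h.2.2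
    simp only [Walk.length_cons]
    omega

lemma Connected.cube_dist_le_ceil3 (hG : G.Connected) (a b : V) :
    (cube G).dist a b ≤ ceil3 (G.dist a b) := by
  induction hn : G.dist a b using Nat.strong_induction_on generalizing a with
  | _ n ih =>
  rcases eq_or_ne a b with rfl | hab
  · simp
  have := hn ▸ hG.pos_dist_of_ne hab
  by_cases hn3 : n ≤ 3
  · have := hG.cube_dist_le_one (hn ▸ hn3)
    unfold ceil3
    omega
  obtain ⟨p, hp⟩ := hG.exists_walk_length_eq_dist a b
  have hac : G.dist a (p.getVert 3) ≤ 3 := (dist_le (p.take 3)).trans (by simp)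
  have hcb : G.dist (p.getVert 3) b ≤ n - 3 := (dist_le (p.drop 3)).trans (by simp [hp, hn])
  calc (cube G).dist a b ≤ (cube G).dist a (p.getVert 3) + (cube G).dist (p.getVert 3) b :=
        (connected_cube hG).dist_triangle
    _ ≤ 1 + ceil3 (G.dist (p.getVert 3) b) :=
        add_le_add (hG.cube_dist_le_one hac) (ih _ (by omega) _ rfl)
    _ ≤ ceil3 n := by unfold ceil3; omega

theorem Connected.cube_dist (hG : G.Connected) (a b : V) :
    (cube G).dist a b = ceil3 (G.dist a b) := by
  obtain ⟨p, hp⟩ := (connected_cube hG).exists_walk_length_eq_dist a b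
  have := hp ▸ hG.dist_le_three_mul_length p
  have := hG.cube_dist_le_ceil3 a b
  unfold ceil3 at *
  omega

lemma Connected.dist_eq_add_of_not_reachable_induce (hG : G.Connected) {x : V}
    {s u : {v | v ≠ x}} (h : ¬(G.induce {v | v ≠ x}).Reachable s u) :
    G.dist s u = G.dist s x + G.dist x u := by
  classical
  obtain ⟨p, hp⟩ := hG.exists_walk_length_eq_dist s u
  have hx : x ∈ p.support := by
    by_contra hx
    exact h (p.induce {v | v ≠ x} fun v hv => ne_of_mem_of_not_mem hv hx).reachable
  refine le_antisymm hG.dist_triangle ?_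
  calc G.dist s x + G.dist x u ≤ (p.takeUntil x hx).length + (p.dropUntil x hx).length :=
        add_le_add (dist_le _) (dist_le _)
    _ = G.dist s u := by rw [← Walk.length_append, p.take_spec hx, hp]

lemma exists_adj_reachable_induce {x w : V} (p : G.Walk w x) (hw : w ≠ x) :
    ∃ u : {v | v ≠ x}, G.Adj x u ∧ (G.induce {v | v ≠ x}).Reachable ⟨w, hw⟩ u := by
  induction p with
  | nil => exact absurd rfl hw
  | @cons w c x h q ih =>
    by_cases hc : c = x
    · subst hc
      exact ⟨⟨w, hw⟩, h.symm, .rfl⟩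
    · obtain ⟨u, hxu, hcu⟩ := ih hc
      have hwc : (G.induce {v | v ≠ x}).Adj ⟨w, hw⟩ ⟨c, hc⟩ := induce_adj.2 h
      exact ⟨u, hxu, hwc.reachable.trans hcu⟩

lemma Connected.exists_adj_mem_supp (hG : G.Connected) {x : V}
    (C : (G.induce {v | v ≠ x}).ConnectedComponent) : ∃ u ∈ C.supp, G.Adj x u := by
  obtain ⟨w, rfl⟩ := C.exists_rep
  obtain ⟨p⟩ := hG w x
  obtain ⟨u, hxu, hwu⟩ := exists_adj_reachable_induce p w.2
  exact ⟨u, ConnectedComponent.sound hwu.symm, hxu⟩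

end SimpleGraph

/-- If S resolves the cube of a tree T, then at most one connected component of
T − x contains no vertex of S. -/
theorem at_most_one_component_misses_resolving_set {V : Type*} (G : SimpleGraph V)
    (hT : G.IsTree) (S : Set V) (hS : IsResolving (cube G) S) (x : V) :
    {C : (G.induce {v | v ≠ x}).ConnectedComponent |
      ∀ v, v ∈ C.supp → (v : V) ∉ S}.Subsingleton := by
  have hG : G.Connected := hT.connected
  intro C₁ hC₁ C₂ hC₂
  by_contra hne
  obtain ⟨u, hu, hxu⟩ := hG.exists_adj_mem_supp C₁
  obtain ⟨v, hv, hxv⟩ := hG.exists_adj_mem_supp C₂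
  have huv : (u : V) ≠ v := fun h => hne (by rw [← hu, ← hv, Subtype.ext h])
  obtain ⟨s, hsS, hsuv⟩ := hS u v huv
  refine hsuv ?_
  rw [hG.cube_dist, hG.cube_dist]
  congr 1
  rw [← dist_eq_one_iff_adj] at hxu hxv
  by_cases hsx : s = x
  · rw [hsx, hxu, hxv]
  have separated {C : (G.induce {v | v ≠ x}).ConnectedComponent}
      (hC : ∀ w, w ∈ C.supp → (w : V) ∉ S) {w : {v | v ≠ x}} (hw : w ∈ C.supp) :
      ¬(G.induce {v | v ≠ x}).Reachable ⟨s, hsx⟩ w :=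
    fun h => hC ⟨s, hsx⟩ ((ConnectedComponent.sound h).trans hw) hsS
  rw [hG.dist_eq_add_of_not_reachable_induce (separated hC₁ hu),
    hG.dist_eq_add_of_not_reachable_induce (separated hC₂ hv), hxu, hxv]
end

section
/- Let v be a major stem of a tree T with legs L_1, …, L_m (m ≥ 2). Then every resolving set S of T^3 contains at least one vertex from L_i for all but at most one index i; in particular, S contains at least m − 1 vertices from the union of the legs attached to v. -/
open SimpleGraph

/-- A connected component `D` of `T − w` is a *leg* (branch path) at `w` if the
branch it spans is a path, equivalently (in a tree) every vertex of it has
degree at most 2 in `T`. -/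
def IsLegComp {V : Type*} [Fintype V] (G : SimpleGraph V) [DecidableRel G.Adj] (w : V)
    (D : (G.induce {x | x ≠ w}).ConnectedComponent) : Prop :=
  ∀ x ∈ D.supp, G.degree (x : V) ≤ 2

/-- A *major stem* is a vertex of degree ≥ 3 having at least two legs attached. -/
def IsMajorStem {V : Type*} [Fintype V] (G : SimpleGraph V) [DecidableRel G.Adj]
    (w : V) : Prop :=
  3 ≤ G.degree w ∧ ∃ D₁ D₂ : (G.induce {x | x ≠ w}).ConnectedComponent,
    D₁ ≠ D₂ ∧ IsLegComp G w D₁ ∧ IsLegComp G w D₂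

/-!
Let `a`, `b` be the neighbours of `v` in two distinct components `D₁`, `D₂` of `T - v`. Every
path from a vertex `s ∉ D₁ ∪ D₂` to `a` or to `b` passes through `v`, so `d(s, a) = d(s, v) + 1 =
d(s, b)`; since distances in `T³` are `⌈d_T / 3⌉`, no such `s` resolves `a` and `b` in `T³`. Hence
a resolving set of `T³` meets all components of `T - v` but at most one, and as the legs are
pairwise disjoint it has at least `m - 1` vertices in their union.
-/

namespace SimpleGraph

variable {V : Type*} {G : SimpleGraph V} {u w : V}

lemma Reachable.exists_cube_walk_of_dist_le_three (h : G.Reachable u w) (hd : G.dist u w ≤ 3) :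
    ∃ q : (cube G).Walk u w, q.length ≤ ceil3 (G.dist u w) := by
  by_cases huw : u = w
  · subst huw
    exact ⟨.nil, Nat.zero_le _⟩
  · have hpos := h.pos_dist_of_ne huw
    have hadj : (cube G).Adj u w := ⟨huw, hpos, hd⟩
    refine ⟨hadj.toWalk, ?_⟩
    rw [hadj.length_toWalk, ceil3]
    omega

lemma Walk.exists_cube_walk_length_le (p : G.Walk u w) :
    ∃ q : (cube G).Walk u w, q.length ≤ ceil3 p.length := by
  induction h : p.length using Nat.strong_induction_on generalizing u with
  | _ n ih =>
  by_cases hn : n ≤ 3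
  · have hp := dist_le p
    obtain ⟨q, hq⟩ := Reachable.exists_cube_walk_of_dist_le_three ⟨p⟩ (by omega)
    exact ⟨q, hq.trans (by unfold ceil3; omega)⟩
  · have hp := dist_le (p.take 3)
    rw [Walk.take_length] at hp
    obtain ⟨q₁, hq₁⟩ := Reachable.exists_cube_walk_of_dist_le_three ⟨p.take 3⟩ (by omega)
    obtain ⟨q₂, hq₂⟩ := ih (n - 3) (by omega) (p.drop 3) (by simp [h])
    refine ⟨q₁.append q₂, ?_⟩
    rw [Walk.length_append]
    unfold ceil3 at *
    omega

lemma Connected.dist_le_three_mul_length_cube (hc : G.Connected) (q : (cube G).Walk u w) :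
    G.dist u w ≤ 3 * q.length := by
  induction q with
  | nil => simp
  | @cons u x w h q ih =>
    have htri := hc.dist_triangle (u := u) (v := x) (w := w)
    have hux := h.2.2
    rw [Walk.length_cons]
    omega

theorem Connected.dist_cube (hc : G.Connected) (u w : V) :
    (cube G).dist u w = ceil3 (G.dist u w) := by
  obtain ⟨p, hp⟩ := hc.exists_walk_length_eq_dist u w
  obtain ⟨q, hq⟩ := p.exists_cube_walk_length_le
  obtain ⟨r, hr⟩ := Reachable.exists_walk_length_eq_dist ⟨q⟩
  have hlower := hc.dist_le_three_mul_length_cube r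
  have hupper := dist_le q
  unfold ceil3 at *
  omega

variable {v : V}

lemma Preconnected.exists_mem_supp_adj (hc : G.Preconnected)
    (D : (G.induce {x | x ≠ v}).ConnectedComponent) :
    ∃ a ∈ D.supp, G.Adj (a : V) v := by
  obtain ⟨y, hy⟩ := D.exists_rep
  obtain ⟨p⟩ := hc (y : V) v
  obtain ⟨d, -, ⟨a, ha, hda⟩, hd⟩ :=
    p.exists_boundary_dart (Subtype.val '' D.supp) ⟨y, hy, rfl⟩ (fun ⟨x, _, hx⟩ => x.2 hx)
  have hdv : d.snd = v := by
    by_contra hdv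
    exact hd ⟨⟨d.snd, hdv⟩, D.mem_supp_of_adj_mem_supp ha
      (show G.Adj a d.snd from hda ▸ d.adj), rfl⟩
  exact ⟨a, ha, hda ▸ hdv ▸ d.adj⟩

lemma Connected.dist_eq_add_of_notMem_supp (hc : G.Connected)
    {D : (G.induce {x | x ≠ v}).ConnectedComponent} {a : {x // x ≠ v}} (ha : a ∈ D.supp)
    {s : V} (hs : s ∉ Subtype.val '' D.supp) :
    G.dist s a = G.dist s v + G.dist v a := by
  classical
  obtain ⟨p, hp⟩ := hc.exists_walk_length_eq_dist s a
  have hv : v ∈ p.support := by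
    by_contra hv
    have hp' := p.induce {x | x ≠ v} fun x hx (hxv : x = v) => hv (hxv ▸ hx)
    exact hs ⟨_, (ConnectedComponent.eq.2 ⟨hp'⟩).trans ha, rfl⟩
  refine le_antisymm hc.dist_triangle ?_
  calc G.dist s v + G.dist v a
      ≤ (p.takeUntil v hv).length + (p.dropUntil v hv).length :=
        Nat.add_le_add (dist_le _) (dist_le _)
    _ = G.dist s a := by rw [← Walk.length_append, p.take_spec hv, hp]

end SimpleGraph

theorem IsResolving.eq_of_inter_supp_eq_empty {V : Type*} {G : SimpleGraph V} {v : V}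
    (hc : G.Connected) {S : Set V}
    (hS : IsResolving (cube G) S) {D₁ D₂ : (G.induce {x | x ≠ v}).ConnectedComponent}
    (h₁ : S ∩ Subtype.val '' D₁.supp = ∅) (h₂ : S ∩ Subtype.val '' D₂.supp = ∅) : D₁ = D₂ := by
  obtain ⟨a, ha, hav⟩ := hc.preconnected.exists_mem_supp_adj D₁
  obtain ⟨b, hb, hbv⟩ := hc.preconnected.exists_mem_supp_adj D₂
  by_contra hne
  have hab : (a : V) ≠ b := fun h => hne (ha.symm.trans (Subtype.ext h ▸ hb))
  obtain ⟨s, hsS, hs⟩ := hS a b hab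
  have hs₁ : s ∉ Subtype.val '' D₁.supp := fun h => h₁.subset ⟨hsS, h⟩
  have hs₂ : s ∉ Subtype.val '' D₂.supp := fun h => h₂.subset ⟨hsS, h⟩
  have htwin : G.dist s a = G.dist s b := by
    rw [hc.dist_eq_add_of_notMem_supp ha hs₁, hc.dist_eq_add_of_notMem_supp hb hs₂,
      dist_eq_one_iff_adj.2 hav.symm, dist_eq_one_iff_adj.2 hbv.symm]
  exact hs (by rw [hc.dist_cube, hc.dist_cube, htwin])

theorem Set.card_sub_one_le_ncard_iUnion {ι α : Type*} [Fintype ι] [Finite α] {B : ι → Set α}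
    (hB : Pairwise (Function.onFun Disjoint B)) (h : ∀ i j, B i = ∅ → B j = ∅ → i = j) :
    Fintype.card ι - 1 ≤ (⋃ i, B i).ncard := by
  classical
  have hempty : (Finset.univ.filter fun i => ¬ (B i).Nonempty).card ≤ 1 :=
    Finset.card_le_one.2 fun i hi j hj =>
      h i j (by simpa [Set.not_nonempty_iff_eq_empty] using hi)
        (by simpa [Set.not_nonempty_iff_eq_empty] using hj)
  calc Fintype.card ι - 1
      ≤ (Finset.univ.filter fun i => (B i).Nonempty).card := by
        have := Finset.card_filter_add_card_filter_not (s := Finset.univ) (fun i => (B i).Nonempty)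
        rw [Finset.card_univ] at this
        omega
    _ = ∑ i, if (B i).Nonempty then 1 else 0 := Finset.card_filter _ _
    _ ≤ ∑ i, (B i).ncard := Finset.sum_le_sum fun i _ => by
        split_ifs with hi
        · exact (Set.ncard_pos).2 hi
        · exact Nat.zero_le _
    _ = (⋃ i, B i).ncard := by
        rw [Set.ncard_iUnion_of_finite (fun i => Set.toFinite _) hB, finsum_eq_sum_of_fintype]

theorem resolving_hits_legs_general {V : Type*} [Fintype V] (G : SimpleGraph V)
    (hT : G.IsTree) (v : V)
    (m : ℕ)
    (L : Fin m → (G.induce {x | x ≠ v}).ConnectedComponent)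
    (hinj : Function.Injective L)
    (S : Set V) (hS : IsResolving (cube G) S) :
    (∀ i j : Fin m, S ∩ (Subtype.val '' (L i).supp) = ∅ →
        S ∩ (Subtype.val '' (L j).supp) = ∅ → i = j) ∧
    m - 1 ≤ (S ∩ ⋃ i, Subtype.val '' (L i).supp).ncard := by
  have hmiss : ∀ i j : Fin m, S ∩ (Subtype.val '' (L i).supp) = ∅ →
      S ∩ (Subtype.val '' (L j).supp) = ∅ → i = j := fun i j hi hj =>
    hinj (hS.eq_of_inter_supp_eq_empty hT.connected hi hj)
  have hdisj : Pairwise (Function.onFun Disjoint fun i => S ∩ Subtype.val '' (L i).supp) :=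
    fun i j hij => Disjoint.mono Set.inter_subset_right Set.inter_subset_right <|
      (Set.disjoint_image_iff Subtype.val_injective).2 <|
        pairwise_disjoint_supp_connectedComponent _ (hinj.ne hij)
  refine ⟨hmiss, ?_⟩
  rw [Set.inter_iUnion]
  simpa using Set.card_sub_one_le_ncard_iUnion hdisj hmiss

/-- A resolving set of the cube hits every leg of a major stem with at most one
exception; in particular it contains at least m − 1 vertices from the legs. -/
theorem resolving_hits_legs {V : Type*} [Fintype V] (G : SimpleGraph V)
    [DecidableRel G.Adj] (hT : G.IsTree) (v : V) (hdeg : 3 ≤ G.degree v)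
    (m : ℕ) (hm : 2 ≤ m)
    (L : Fin m → (G.induce {x | x ≠ v}).ConnectedComponent)
    (hinj : Function.Injective L) (hleg : ∀ i, IsLegComp G v (L i))
    (S : Set V) (hS : IsResolving (cube G) S) :
    (∀ i j : Fin m, S ∩ (Subtype.val '' (L i).supp) = ∅ →
        S ∩ (Subtype.val '' (L j).supp) = ∅ → i = j) ∧
    m - 1 ≤ (S ∩ ⋃ i, Subtype.val '' (L i).supp).ncard :=
  resolving_hits_legs_general G hT v m L hinj S hS
end
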